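/- arXiv:2103.15699 — 2 statements merged into one kernel-verified Lean document; each statement's English description precedes it below -/
import Mathlib

section
/- The following equivalences hold: (a) the multivalued part of the closure of L(A,B) is trivial (i.e., L(A,B) is regular) if and only if D(A,B) is dense in K; (b) there exists c ≥ 0 with ‖B f‖ ≤ c ‖A f‖ for all f ∈ E (i.e., L(A,B) is a bounded operator) if and only if D(A,B) = K, equivalently ran B* ⊆ ran A*; (c) L(A,B) is an everywhere defined bounded operator from H to K if and only if ran B* ⊆ ran A* and ran A = H. -/
/-!
Part (b) is Douglas' range inclusion lemma. If `‖B f‖ ≤ c ‖A f‖`, the functional `⟪k, B ·⟫`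
factors through `A` (Hahn–Banach on `ran A`, then Riesz), which says `B* k ∈ ran A*`.
Conversely, if `ran B* ⊆ ran A*`, the open mapping theorem applied to the projection
`{(k, x) | B* k = A* x} → K` gives `x` with `A* x = B* k` and `‖x‖ ≤ C ‖k‖`; for `k = B f` this
yields `‖B f‖² = Re ⟪A f, x⟫ ≤ C ‖A f‖ ‖B f‖`.

For (a), view `L(A,B)` inside the Hilbert space `H ⊕ K`: its closure is the orthogonal
complement of the kernel of its adjoint `(x, y) ↦ A* x + B* y`, so `(0, k)` lies in the closure
iff `k ⊥ D(A,B)`, and `D(A,B)ᗮ = 0` iff `D(A,B)` is dense. Part (c) is (b) together with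
`ran A = H`.
-/

open ContinuousLinearMap Function Set InnerProductSpace

namespace ContinuousLinearMap

theorem exists_preimage_norm_le_of_range_subset {𝕜 X Y Z : Type*} [NontriviallyNormedField 𝕜]
    [NormedAddCommGroup X] [NormedSpace 𝕜 X] [CompleteSpace X]
    [NormedAddCommGroup Y] [NormedSpace 𝕜 Y] [CompleteSpace Y]
    [NormedAddCommGroup Z] [NormedSpace 𝕜 Z]
    (T : X →L[𝕜] Z) (S : Y →L[𝕜] Z) (h : range S ⊆ range T) :
    ∃ C > 0, ∀ y, ∃ x, T x = S y ∧ ‖x‖ ≤ C * ‖y‖ := by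
  let M := (S.comp (fst 𝕜 Y X) - T.comp (snd 𝕜 Y X)).ker
  have : CompleteSpace M := (isClosed_ker _).completeSpace_coe
  have hsurj : Surjective ((fst 𝕜 Y X).comp M.subtypeL) := fun y => by
    obtain ⟨x, hx⟩ := h ⟨y, rfl⟩
    exact ⟨⟨(y, x), by simp [M, hx]⟩, rfl⟩
  obtain ⟨C, hC, hpre⟩ := exists_preimage_norm_le _ hsurj
  refine ⟨C, hC, fun y => ?_⟩
  obtain ⟨⟨⟨y', x⟩, hm⟩, rfl, hle⟩ := hpre y
  have hx : S y' = T x := by simpa [M, sub_eq_zero] using hm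
  exact ⟨x, hx.symm, (_root_.norm_snd_le _).trans hle⟩

theorem exists_strongDual_comp_eq_of_norm_le {𝕜 E F : Type*} [RCLike 𝕜]
    [NormedAddCommGroup E] [NormedSpace 𝕜 E] [NormedAddCommGroup F] [NormedSpace 𝕜 F]
    (A : E →L[𝕜] F) (φ : E →ₗ[𝕜] 𝕜) {C : ℝ} (h : ∀ f, ‖φ f‖ ≤ C * ‖A f‖) :
    ∃ ψ : StrongDual 𝕜 F, ∀ f, ψ (A f) = φ f := by
  have hker : LinearMap.ker (A : E →ₗ[𝕜] F) ≤ LinearMap.ker φ := fun f hf => by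
    have hf : A f = 0 := hf
    simpa [hf] using h f
  let ψ₀ : LinearMap.range (A : E →ₗ[𝕜] F) →ₗ[𝕜] 𝕜 :=
    (LinearMap.ker _).liftQ φ hker ∘ₗ (A : E →ₗ[𝕜] F).quotKerEquivRange.symm
  have hψ₀ : ∀ f, ψ₀ ⟨(A : E →ₗ[𝕜] F) f, LinearMap.mem_range_self _ f⟩ = φ f := fun f => by
    simp only [ψ₀, LinearMap.comp_apply, LinearEquiv.coe_coe]
    rw [LinearMap.quotKerEquivRange_symm_apply_image]
    rfl
  have hbound : ∀ y, ‖ψ₀ y‖ ≤ C * ‖y‖ := by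
    rintro ⟨_, f, rfl⟩
    exact (hψ₀ f).symm ▸ h f
  obtain ⟨ψ, hψ, -⟩ := exists_extension_norm_eq _ (ψ₀.mkContinuous C hbound)
  exact ⟨ψ, fun f => (hψ _).trans (hψ₀ f)⟩

variable {𝕜 E H K : Type*} [RCLike 𝕜]
    [NormedAddCommGroup E] [InnerProductSpace 𝕜 E] [CompleteSpace E]
    [NormedAddCommGroup H] [InnerProductSpace 𝕜 H] [CompleteSpace H]
    [NormedAddCommGroup K] [InnerProductSpace 𝕜 K] [CompleteSpace K]
    (A : E →L[𝕜] H) (B : E →L[𝕜] K)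

theorem range_adjoint_subset_of_norm_le {c : ℝ} (hc : ∀ f, ‖B f‖ ≤ c * ‖A f‖) :
    range (adjoint B) ⊆ range (adjoint A) := by
  rintro _ ⟨k, rfl⟩
  have hbound : ∀ f, ‖⟪k, B f⟫_𝕜‖ ≤ (‖k‖ * c) * ‖A f‖ := fun f =>
    calc ‖⟪k, B f⟫_𝕜‖ ≤ ‖k‖ * ‖B f‖ := norm_inner_le_norm _ _
      _ ≤ (‖k‖ * c) * ‖A f‖ := by rw [mul_assoc]; gcongr; exact hc f
  obtain ⟨ψ, hψ⟩ :=
    exists_strongDual_comp_eq_of_norm_le A ((innerSL 𝕜 k).comp B : E →ₗ[𝕜] 𝕜) hbound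
  refine ⟨(toDual 𝕜 H).symm ψ, ext_inner_right 𝕜 fun f => ?_⟩
  rw [adjoint_inner_left, adjoint_inner_left, toDual_symm_apply, hψ]
  rfl

theorem exists_norm_le_of_range_adjoint_subset (h : range (adjoint B) ⊆ range (adjoint A)) :
    ∃ c, 0 ≤ c ∧ ∀ f, ‖B f‖ ≤ c * ‖A f‖ := by
  obtain ⟨C, hC, hpre⟩ :=
    exists_preimage_norm_le_of_range_subset (adjoint A : H →L[𝕜] E) (adjoint B) h
  refine ⟨C, hC.le, fun f => ?_⟩
  obtain ⟨x, hx, hxle⟩ := hpre (B f)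
  have key : ‖B f‖ * ‖B f‖ ≤ C * ‖A f‖ * ‖B f‖ :=
    calc ‖B f‖ * ‖B f‖ = RCLike.re ⟪A f, x⟫_𝕜 := by
          rw [← inner_self_eq_norm_mul_norm (𝕜 := 𝕜), ← adjoint_inner_right, ← hx,
            adjoint_inner_right]
      _ ≤ ‖A f‖ * ‖x‖ := re_inner_le_norm _ _
      _ ≤ ‖A f‖ * (C * ‖B f‖) := by gcongr
      _ = C * ‖A f‖ * ‖B f‖ := by ring
  rcases (norm_nonneg (B f)).eq_or_lt with h0 | hpos
  · rw [← h0]; positivity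
  · exact le_of_mul_le_mul_right key hpos

theorem range_adjoint_subset_iff_exists_norm_le :
    range (adjoint B) ⊆ range (adjoint A) ↔ ∃ c, 0 ≤ c ∧ ∀ f, ‖B f‖ ≤ c * ‖A f‖ :=
  ⟨exists_norm_le_of_range_adjoint_subset A B,
    fun ⟨_, _, hc⟩ => range_adjoint_subset_of_norm_le A B hc⟩

noncomputable def prodL2 : E →L[𝕜] WithLp 2 (H × K) :=
  (WithLp.prodContinuousLinearEquiv 2 𝕜 H K).symm.toContinuousLinearMap.comp (A.prod B)

theorem adjoint_prodL2_apply (v : WithLp 2 (H × K)) :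
    adjoint (prodL2 A B) v = adjoint A v.fst + adjoint B v.snd := by
  refine ext_inner_left 𝕜 fun f => ?_
  simp [adjoint_inner_right, prodL2, inner_add_right]

/-- The subspace `D(A,B)`. -/
noncomputable def adjointDomain : Submodule 𝕜 K :=
  (LinearMap.range (adjoint A : H →ₗ[𝕜] E)).comap (adjoint B : K →ₗ[𝕜] E)

theorem coe_adjointDomain :
    (adjointDomain A B : Set K) = {k | adjoint B k ∈ range (adjoint A)} := by
  ext; simp [adjointDomain]

theorem zero_prod_mem_closure_range_iff (k : K) :
    ((0 : H), k) ∈ closure (range fun f => (A f, B f)) ↔ k ∈ (adjointDomain A B)ᗮ := by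
  let e := WithLp.prodContinuousLinearEquiv 2 𝕜 H K
  have hrange : (range fun f => (A f, B f)) = e.symm ⁻¹' range (prodL2 A B) := by
    ext p; simp [e, prodL2]
  have hclosure : closure (range (prodL2 A B)) = (((prodL2 A B).range)ᗮᗮ : Set _) := by
    rw [Submodule.orthogonal_orthogonal_eq_closure, Submodule.topologicalClosure_coe]
    rfl
  rw [hrange, ← ContinuousLinearEquiv.preimage_closure, mem_preimage, hclosure, SetLike.mem_coe,
    orthogonal_range, Submodule.mem_orthogonal', Submodule.mem_orthogonal']
  constructor
  · rintro hk y ⟨x, hx : adjoint A x = adjoint B y⟩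
    have hv : WithLp.toLp 2 (-x, y) ∈ (adjoint (prodL2 A B)).ker := by
      simp [adjoint_prodL2_apply, hx]
    simpa [e] using hk _ hv
  · intro hk v hv
    have hv' : adjoint A (-v.fst) = adjoint B v.snd := by
      simpa [adjoint_prodL2_apply, neg_eq_iff_add_eq_zero, add_comm] using hv
    simpa [e] using hk v.snd ⟨-v.fst, hv'⟩

theorem multivaluedPart_closure_eq_zero_iff_dense :
    {k : K | ((0 : H), k) ∈ closure (range fun f => (A f, B f))} = {0} ↔
      Dense (adjointDomain A B : Set K) := by
  have hset : {k : K | ((0 : H), k) ∈ closure (range fun f => (A f, B f))} =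
      ((adjointDomain A B)ᗮ : Set K) :=
    Set.ext (zero_prod_mem_closure_range_iff A B)
  rw [Submodule.dense_iff_topologicalClosure_eq_top, Submodule.topologicalClosure_eq_top_iff,
    hset, ← Submodule.bot_coe (R := 𝕜), SetLike.coe_set_eq]

end ContinuousLinearMap

/-- With `D(A,B) = {k ∈ K : B* k ∈ ran A*}`: (a) the multivalued part of
the closure of `L(A,B)` is trivial (`L(A,B)` is regular) iff `D(A,B)` is dense in `K`;
(b) there is `c ≥ 0` with `‖B f‖ ≤ c ‖A f‖` for all `f` (`L(A,B)` is a bounded operator) iff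
`D(A,B) = K`, equivalently `ran B* ⊆ ran A*`; (c) `L(A,B)` is an everywhere defined bounded
operator from `H` to `K` (i.e. its domain `ran A` is all of `H` and it is bounded) iff
`ran B* ⊆ ran A*` and `ran A = H`. -/
theorem regular_bounded_everywhere_characterizations
    {E H K : Type}
    [NormedAddCommGroup E] [InnerProductSpace ℂ E] [CompleteSpace E]
    [NormedAddCommGroup H] [InnerProductSpace ℂ H] [CompleteSpace H]
    [NormedAddCommGroup K] [InnerProductSpace ℂ K] [CompleteSpace K]
    (A : E →L[ℂ] H) (B : E →L[ℂ] K) :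
    ({k : K | ((0 : H), k) ∈ closure (Set.range fun f : E => ((A f, B f) : H × K))} = {0} ↔
      Dense {k : K | adjoint B k ∈ Set.range ⇑(adjoint A)}) ∧
    ((∃ c : ℝ, 0 ≤ c ∧ ∀ f : E, ‖B f‖ ≤ c * ‖A f‖) ↔
      {k : K | adjoint B k ∈ Set.range ⇑(adjoint A)} = Set.univ) ∧
    ({k : K | adjoint B k ∈ Set.range ⇑(adjoint A)} = Set.univ ↔
      Set.range ⇑(adjoint B) ⊆ Set.range ⇑(adjoint A)) ∧
    ((Set.range ⇑A = Set.univ ∧ ∃ c : ℝ, 0 ≤ c ∧ ∀ f : E, ‖B f‖ ≤ c * ‖A f‖) ↔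
      Set.range ⇑(adjoint B) ⊆ Set.range ⇑(adjoint A) ∧ Set.range ⇑A = Set.univ) := by
  have hbound := (range_adjoint_subset_iff_exists_norm_le A B).symm
  have hdomain : {k : K | adjoint B k ∈ Set.range ⇑(adjoint A)} = Set.univ ↔
      Set.range ⇑(adjoint B) ⊆ Set.range ⇑(adjoint A) := by
    simp only [Set.eq_univ_iff_forall, Set.mem_ofPred_eq, Set.range_subset_iff]
  refine ⟨?_, hbound.trans hdomain.symm, hdomain, ?_⟩
  · rw [← coe_adjointDomain]
    exact multivaluedPart_closure_eq_zero_iff_dense A B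
  · rw [hbound, and_comm]
end

section
/- A pair of bounded linear operators (B₁, B₂) from E to K is a Lebesgue type decomposition of B with respect to A if and only if there exists a closed subspace L of K satisfying L ⊆ closure(D(A,B)), L ∩ D(A,B) = {0}, and closure(L⊥ ∩ D(A,B)) = L⊥ ∩ closure(D(A,B)), such that B₁ = (I − P_M) ∘ B and B₂ = P_M ∘ B, where M = D(A,B)⊥ ⊕ L and P_M is the orthogonal projection of K onto M; moreover, distinct such subspaces L give distinct decompositions, so this correspondence between Lebesgue type decompositions of B with respect to A and such subspaces L is one-to-one. -/
open ContinuousLinearMap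
open scoped InnerProductSpace

/-- A witness for almost domination of `B : E → K` by `A : E → H`: a sequence of complex
Hilbert spaces `Kn n`, bounded operators `Bn n : E → Kn n` and constants `c n ≥ 0` such that
for all `f : E` one has `‖Bn n f‖ ≤ c n * ‖A f‖`, `‖Bn n f‖ ≤ ‖Bn (n+1) f‖` and `‖Bn n f‖`
converges (increasingly) to `‖B f‖`. -/
structure AlmostDominatedWitness
    {E H K : Type}
    [NormedAddCommGroup E] [InnerProductSpace ℂ E] [CompleteSpace E]
    [NormedAddCommGroup H] [InnerProductSpace ℂ H] [CompleteSpace H]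
    [NormedAddCommGroup K] [InnerProductSpace ℂ K] [CompleteSpace K]
    (A : E →L[ℂ] H) (B : E →L[ℂ] K) where
  Kn : ℕ → Type
  [nacg : ∀ n, NormedAddCommGroup (Kn n)]
  [ips : ∀ n, InnerProductSpace ℂ (Kn n)]
  [cs : ∀ n, CompleteSpace (Kn n)]
  Bn : ∀ n, E →L[ℂ] Kn n
  c : ℕ → ℝ
  c_nonneg : ∀ n, 0 ≤ c n
  bound : ∀ (n : ℕ) (f : E), ‖Bn n f‖ ≤ c n * ‖A f‖
  mono : ∀ (n : ℕ) (f : E), ‖Bn n f‖ ≤ ‖Bn (n + 1) f‖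
  tendsto : ∀ f : E, Filter.Tendsto (fun n => ‖Bn n f‖) Filter.atTop (nhds ‖B f‖)

/-- `B` is almost dominated by `A`. -/
def AlmostDominated
    {E H K : Type}
    [NormedAddCommGroup E] [InnerProductSpace ℂ E] [CompleteSpace E]
    [NormedAddCommGroup H] [InnerProductSpace ℂ H] [CompleteSpace H]
    [NormedAddCommGroup K] [InnerProductSpace ℂ K] [CompleteSpace K]
    (A : E →L[ℂ] H) (B : E →L[ℂ] K) : Prop :=
  Nonempty (AlmostDominatedWitness A B)

/-- `B` is singular with respect to `A`: every bounded operator `D : E → E` dominated by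
both `A` and `B` is zero. -/
def SingularWith
    {E H K : Type}
    [NormedAddCommGroup E] [InnerProductSpace ℂ E] [CompleteSpace E]
    [NormedAddCommGroup H] [InnerProductSpace ℂ H] [CompleteSpace H]
    [NormedAddCommGroup K] [InnerProductSpace ℂ K] [CompleteSpace K]
    (A : E →L[ℂ] H) (B : E →L[ℂ] K) : Prop :=
  ∀ D : E →L[ℂ] E,
    (∃ c : ℝ, 0 < c ∧ ∀ f : E, ‖D f‖ ≤ c * ‖A f‖) →
    (∃ c : ℝ, 0 < c ∧ ∀ f : E, ‖D f‖ ≤ c * ‖B f‖) → D = 0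

/-- The subspace `D(A,B) = {k ∈ K : B* k ∈ ran A*}`. -/
noncomputable def DAB
    {E H K : Type}
    [NormedAddCommGroup E] [InnerProductSpace ℂ E] [CompleteSpace E]
    [NormedAddCommGroup H] [InnerProductSpace ℂ H] [CompleteSpace H]
    [NormedAddCommGroup K] [InnerProductSpace ℂ K] [CompleteSpace K]
    (A : E →L[ℂ] H) (B : E →L[ℂ] K) : Submodule ℂ K :=
  Submodule.comap (adjoint B : K →ₗ[ℂ] E) (LinearMap.range (adjoint A : H →ₗ[ℂ] E))

/-- `(B₁, B₂)` is a Lebesgue type decomposition of `B` with respect to `A`: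
`B = B₁ + B₂`, `ran B₁ ⊥ ran B₂`, `B₁` is almost dominated by `A`, and `B₂` is singular
with respect to `A`. -/
def IsLebesgueTypeDecomp
    {E H K : Type}
    [NormedAddCommGroup E] [InnerProductSpace ℂ E] [CompleteSpace E]
    [NormedAddCommGroup H] [InnerProductSpace ℂ H] [CompleteSpace H]
    [NormedAddCommGroup K] [InnerProductSpace ℂ K] [CompleteSpace K]
    (A : E →L[ℂ] H) (B B₁ B₂ : E →L[ℂ] K) : Prop :=
  B = B₁ + B₂ ∧ (∀ f g : E, ⟪B₁ f, B₂ g⟫_ℂ = 0) ∧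
    AlmostDominated A B₁ ∧ SingularWith A B₂

/-- The data of a closed subspace `L ⊆ K` parametrizing a Lebesgue type decomposition,
together with the orthogonal projection `PM` of `K` onto `M = D(A,B)ᗮ ⊕ L`: `L` is closed,
`L ⊆ closure D(A,B)`, `L ∩ D(A,B) = {0}`, `closure (Lᗮ ∩ D(A,B)) = Lᗮ ∩ closure D(A,B)`,
and `PM` is characterized by `PM k ∈ M` and `k - PM k ⊥ M`. -/
def LebSubspaceData
    {E H K : Type}
    [NormedAddCommGroup E] [InnerProductSpace ℂ E] [CompleteSpace E]
    [NormedAddCommGroup H] [InnerProductSpace ℂ H] [CompleteSpace H]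
    [NormedAddCommGroup K] [InnerProductSpace ℂ K] [CompleteSpace K]
    (A : E →L[ℂ] H) (B : E →L[ℂ] K) (L : Submodule ℂ K) (PM : K →L[ℂ] K) : Prop :=
  IsClosed (L : Set K) ∧
  (L : Set K) ⊆ closure ((DAB A B : Submodule ℂ K) : Set K) ∧
  L ⊓ DAB A B = ⊥ ∧
  closure ((Lᗮ : Set K) ∩ ((DAB A B : Submodule ℂ K) : Set K)) =
    (Lᗮ : Set K) ∩ closure ((DAB A B : Submodule ℂ K) : Set K) ∧
  (∀ k : K, PM k ∈ (DAB A B)ᗮ ⊔ L ∧ k - PM k ∈ ((DAB A B)ᗮ ⊔ L)ᗮ)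

open Filter Topology

/-!
Everything is driven by the description of `D(A,C)` as the set of `k` for which
`f ↦ ⟪C f, k⟫` is `A`-bounded (Riesz representation plus Hahn–Banach).

`C` is almost dominated by `A` iff `ran C ⊆ closure D(A,C)`. Given the inclusion, take for
`Bₙ f` the component of `(0, C f) ∈ H ⊕₂ K` orthogonal to the graph of `(n A, C)`, so that
`‖Bₙ f‖ = dist ((0, C f), graph (n A, C))`. These are dominated by `n A` and increase with
`n`; if their limit stayed below `‖C f‖`, the near-minimisers `g n` would have
`n ‖A (g n)‖` bounded, so `C (g n)` would tend weakly to `0` against `D(A,C)`, hence against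
`C f`, which is impossible. Conversely, polarization turns `‖Bₙ f‖ → ‖C f‖` into vectors of
`D(A,C)` converging weakly to `C g` on `closure (ran C)`.

`C` is singular with respect to `A` iff `C* k = 0` for all `k ∈ D(A,C)`; the rank-one
operators `f ↦ ⟪C* k, f⟫ C* k` are dominated by both `A` and `C`.

A decomposition `B = B₁ + B₂` then corresponds to `L = closure (P (ran B₂))`, `P` the
projection onto `closure D(A,B)`, and `PM = P_{D(A,B)ᗮ} + P_L`; conversely `L` is recovered
from `PM ∘ B` by the same formula, which gives injectivity.
-/

section Hilbert

variable {𝕜 X : Type*} [RCLike 𝕜] [NormedAddCommGroup X] [InnerProductSpace 𝕜 X]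

theorem tendsto_inner_zero_of_mem_closure {ι : Type*} {l : Filter ι} {x : ι → X} {R : ℝ}
    (hx : ∀ n, ‖x n‖ ≤ R) {s : Set X} (hs : ∀ k ∈ s, Tendsto (fun n => ⟪x n, k⟫_𝕜) l (𝓝 0))
    {k : X} (hk : k ∈ closure s) : Tendsto (fun n => ⟪x n, k⟫_𝕜) l (𝓝 0) := by
  have hlip : ∀ n, LipschitzWith R.toNNReal (fun k => ⟪x n, k⟫_𝕜) := fun n =>
    LipschitzWith.of_dist_le_mul fun a b => by
      rw [dist_eq_norm, dist_eq_norm, ← inner_sub_right, Real.coe_toNNReal']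
      exact (norm_inner_le_norm _ _).trans
        (mul_le_mul_of_nonneg_right ((hx n).trans (le_max_left _ _)) (norm_nonneg _))
  exact ((LipschitzWith.uniformEquicontinuous _ _ hlip).equicontinuous k).tendsto_of_mem_closure
    tendsto_const_nhds hs hk

theorem norm_le_of_tendsto_inner {x : X} {y : ℕ → X} {r : ℝ} (h : ∀ n, ‖x - y n‖ ≤ r)
    (hy : Tendsto (fun n => ⟪y n, x⟫_𝕜) atTop (𝓝 0)) : ‖x‖ ≤ r := by
  have hr : 0 ≤ r := (norm_nonneg _).trans (h 0)
  have hbound : ∀ n, ‖x‖ ^ 2 ≤ r ^ 2 + 2 * RCLike.re ⟪y n, x⟫_𝕜 := fun n => by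
    have := norm_sub_sq (𝕜 := 𝕜) x (y n)
    rw [← inner_conj_symm, RCLike.conj_re] at this
    nlinarith [h n, norm_nonneg (x - y n), norm_nonneg (y n)]
  have hlim : Tendsto (fun n => r ^ 2 + 2 * RCLike.re ⟪y n, x⟫_𝕜) atTop (𝓝 (r ^ 2)) := by
    simpa using ((RCLike.continuous_re.tendsto _).comp hy).const_mul 2 |>.const_add (r ^ 2)
  exact (pow_le_pow_iff_left₀ (norm_nonneg x) hr two_ne_zero).mp
    (ge_of_tendsto' hlim hbound)

theorem tendsto_inner_of_tendsto_norm {E ι : Type*} [AddCommGroup E] [Module 𝕜 E]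
    {l : Filter ι} {Y : ι → Type*}
    [∀ i, NormedAddCommGroup (Y i)] [∀ i, InnerProductSpace 𝕜 (Y i)]
    (T : ∀ i, E →ₗ[𝕜] Y i) (C : E →ₗ[𝕜] X)
    (hT : ∀ f, Tendsto (fun i => ‖T i f‖) l (𝓝 ‖C f‖)) (f g : E) :
    Tendsto (fun i => ⟪T i f, T i g⟫_𝕜) l (𝓝 ⟪C f, C g⟫_𝕜) := by
  have hsq : ∀ u, Tendsto (fun i => (‖T i u‖ : 𝕜) ^ 2) l (𝓝 ((‖C u‖ : 𝕜) ^ 2)) :=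
    fun u => ((RCLike.continuous_ofReal.tendsto _).comp (hT u)).pow 2
  simp only [inner_eq_sum_norm_sq_div_four, ← map_add, ← map_sub, ← map_smul]
  exact (((hsq _).sub (hsq _)).add (((hsq _).sub (hsq _)).mul_const _)).div_const _

end Hilbert

section Projection

variable {𝕜 X : Type*} [RCLike 𝕜] [NormedAddCommGroup X] [InnerProductSpace 𝕜 X]

theorem Submodule.norm_sub_starProjection_eq_infDist (U : Submodule 𝕜 X)
    [U.HasOrthogonalProjection] (x : X) : ‖x - U.starProjection x‖ = Metric.infDist x U := by
  rw [Submodule.starProjection_minimal, Metric.infDist_eq_iInf]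
  simp only [dist_eq_norm]
  rfl

/-- The form in which `LebSubspaceData` specifies `PM`; unlike `Submodule.starProjection`, it
needs no completeness of `M`. -/
def IsOrthogonalProjection (M : Submodule 𝕜 X) (P : X →L[𝕜] X) : Prop :=
  ∀ k, P k ∈ M ∧ k - P k ∈ Mᗮ

theorem Submodule.isOrthogonalProjection_starProjection (M : Submodule 𝕜 X)
    [M.HasOrthogonalProjection] : IsOrthogonalProjection M M.starProjection := fun k =>
  ⟨M.starProjection_apply_mem k, M.sub_starProjection_mem_orthogonal k⟩

namespace IsOrthogonalProjection

variable {M N : Submodule 𝕜 X} {P Q : X →L[𝕜] X}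

theorem apply_eq_self (hP : IsOrthogonalProjection M P) {m : X} (hm : m ∈ M) : P m = m := by
  have hmem : P m - m ∈ M ⊓ Mᗮ :=
    ⟨M.sub_mem (hP m).1 hm, by simpa using Mᗮ.neg_mem (hP m).2⟩
  rw [Submodule.inf_orthogonal_eq_bot, Submodule.mem_bot] at hmem
  exact sub_eq_zero.mp hmem

theorem apply_eq_zero (hP : IsOrthogonalProjection M P) {k : X} (hk : k ∈ Mᗮ) : P k = 0 := by
  have hmem : P k ∈ M ⊓ Mᗮ := ⟨(hP k).1, by simpa using Mᗮ.sub_mem hk (hP k).2⟩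
  rwa [Submodule.inf_orthogonal_eq_bot, Submodule.mem_bot] at hmem

theorem inner_map_left (hP : IsOrthogonalProjection M P) (x y : X) :
    ⟪P x, y⟫_𝕜 = ⟪x, P y⟫_𝕜 := by
  have h₁ : ⟪P x, y - P y⟫_𝕜 = 0 :=
    Submodule.inner_right_of_mem_orthogonal (hP x).1 (hP y).2
  have h₂ : ⟪x - P x, P y⟫_𝕜 = 0 :=
    Submodule.inner_left_of_mem_orthogonal (hP y).1 (hP x).2
  rw [inner_sub_right] at h₁
  rw [inner_sub_left] at h₂
  linear_combination h₁ - h₂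

theorem adjoint_eq [CompleteSpace X] (hP : IsOrthogonalProjection M P) : adjoint P = P :=
  ext fun x => ext_inner_right 𝕜 fun y => by rw [adjoint_inner_left, hP.inner_map_left]

theorem add (hP : IsOrthogonalProjection M P) (hQ : IsOrthogonalProjection N Q) (hMN : M ⟂ N) :
    IsOrthogonalProjection (M ⊔ N) (P + Q) := fun k => by
  refine ⟨Submodule.add_mem_sup (hP k).1 (hQ k).1, ?_⟩
  rw [← Submodule.inf_orthogonal]
  constructor
  · simpa [sub_add_eq_sub_sub] using Mᗮ.sub_mem (hP k).2 (hMN.symm.le (hQ k).1)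
  · simpa [sub_add_eq_sub_sub_swap] using Nᗮ.sub_mem (hQ k).2 (hMN.le (hP k).1)

end IsOrthogonalProjection

theorem Submodule.inf_orthogonal_sup_eq_bot [CompleteSpace X] {U L : Submodule 𝕜 X}
    (hLU : L ≤ U.topologicalClosure) (hL : L ⊓ U = ⊥) : U ⊓ (Uᗮ ⊔ L) = ⊥ := by
  refine eq_bot_iff.mpr fun m hm => ?_
  obtain ⟨hmU, hmM⟩ := Submodule.mem_inf.mp hm
  obtain ⟨d, hdU, l, hl, rfl⟩ := Submodule.mem_sup.mp hmM
  have hd : d ∈ Uᗮ ⊓ Uᗮᗮ := by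
    refine Submodule.mem_inf.mpr ⟨hdU, ?_⟩
    rw [Submodule.orthogonal_orthogonal_eq_closure]
    simpa only [add_sub_cancel_right] using
      U.topologicalClosure.sub_mem (U.le_topologicalClosure hmU) (hLU hl)
  rw [Submodule.inf_orthogonal_eq_bot, Submodule.mem_bot] at hd
  subst hd
  rw [zero_add] at hmU ⊢
  simpa [hL] using Submodule.mem_inf.mpr ⟨hl, hmU⟩

end Projection

section Riesz

variable {𝕜 E X Y : Type*} [RCLike 𝕜] [NormedAddCommGroup E] [InnerProductSpace 𝕜 E]
  [NormedAddCommGroup X] [InnerProductSpace 𝕜 X] [CompleteSpace X]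

theorem exists_inner_eq_of_norm_le (C : E →L[𝕜] X) (ψ : E →L[𝕜] 𝕜) {c : ℝ}
    (hc : 0 ≤ c) (h : ∀ f, ‖ψ f‖ ≤ c * ‖C f‖) :
    ∃ w : X, ‖w‖ ≤ c ∧ ∀ f, ⟪w, C f⟫_𝕜 = ψ f := by
  have hker : C.ker ≤ ψ.ker := fun f hf => by simpa [show C f = 0 from hf] using h f
  let ℓ : C.range →ₗ[𝕜] 𝕜 :=
    C.ker.liftQ _ hker ∘ₗ (LinearMap.quotKerEquivRange (C : E →ₗ[𝕜] X)).symm.toLinearMap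
  have hℓ : ∀ f, ℓ ⟨C f, LinearMap.mem_range_self _ f⟩ = ψ f := fun f => by
    change C.ker.liftQ _ hker ((LinearMap.quotKerEquivRange (C : E →ₗ[𝕜] X)).symm
      ⟨(C : E →ₗ[𝕜] X) f, _⟩) = ψ f
    rw [LinearMap.quotKerEquivRange_symm_apply_image]
    rfl
  have hbound : ∀ y, ‖ℓ y‖ ≤ c * ‖y‖ := by
    rintro ⟨_, f, rfl⟩
    exact (hℓ f).symm ▸ h f
  obtain ⟨φ, hφ, hφnorm⟩ := exists_extension_norm_eq _ (ℓ.mkContinuous c hbound)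
  refine ⟨(InnerProductSpace.toDual 𝕜 X).symm φ, ?_, fun f => ?_⟩
  · rw [LinearIsometryEquiv.norm_map, hφnorm]
    exact LinearMap.mkContinuous_norm_le ℓ hc hbound
  · rw [InnerProductSpace.toDual_symm_apply, ← hℓ]
    exact hφ ⟨C f, _⟩

variable [CompleteSpace E] [NormedAddCommGroup Y] [InnerProductSpace 𝕜 Y] [CompleteSpace Y]

theorem exists_adjoint_eq_of_norm_le (D : E →L[𝕜] Y) (C : E →L[𝕜] X) {c : ℝ}
    (h : ∀ f, ‖D f‖ ≤ c * ‖C f‖) (y : Y) :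
    ∃ x, adjoint C x = adjoint D y := by
  have hc : 0 ≤ max c 0 := le_max_right _ _
  obtain ⟨w, -, hw⟩ := exists_inner_eq_of_norm_le C ((innerSL 𝕜 y).comp D)
    (mul_nonneg (norm_nonneg y) hc) fun f => calc
      ‖⟪y, D f⟫_𝕜‖ ≤ ‖y‖ * ‖D f‖ := norm_inner_le_norm _ _
      _ ≤ ‖y‖ * (max c 0 * ‖C f‖) := by
        gcongr; exact (h f).trans (by gcongr; exact le_max_left _ _)
      _ = ‖y‖ * max c 0 * ‖C f‖ := by ring
  refine ⟨w, ext_inner_right 𝕜 fun f => ?_⟩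
  simpa [adjoint_inner_left] using hw f

end Riesz

section DAB

variable {E H K : Type}
  [NormedAddCommGroup E] [InnerProductSpace ℂ E] [CompleteSpace E]
  [NormedAddCommGroup H] [InnerProductSpace ℂ H] [CompleteSpace H]
  [NormedAddCommGroup K] [InnerProductSpace ℂ K] [CompleteSpace K]
  {A : E →L[ℂ] H} {C C' : E →L[ℂ] K} {k : K}

theorem mem_DAB_iff : k ∈ DAB A C ↔ ∃ h, adjoint A h = adjoint C k := Iff.rfl

theorem mem_DAB_iff_of_adjoint_eq (hk : adjoint C k = adjoint C' k) :
    k ∈ DAB A C ↔ k ∈ DAB A C' := by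
  rw [mem_DAB_iff, mem_DAB_iff, hk]

theorem mem_DAB_of_adjoint_eq_zero (hk : adjoint C k = 0) : k ∈ DAB A C :=
  mem_DAB_iff.mpr ⟨0, by rw [map_zero, hk]⟩

theorem mem_DAB_of_norm_inner_le {c : ℝ} (hc : 0 ≤ c)
    (h : ∀ f, ‖⟪k, C f⟫_ℂ‖ ≤ c * ‖A f‖) : k ∈ DAB A C := by
  obtain ⟨w, -, hw⟩ := exists_inner_eq_of_norm_le A ((innerSL ℂ k).comp C) hc h
  exact mem_DAB_iff.mpr
    ⟨w, ext_inner_right ℂ fun f => by simpa [adjoint_inner_left] using hw f⟩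

theorem exists_inner_eq_of_mem_DAB (hk : k ∈ DAB A C) :
    ∃ h, ∀ f, ⟪C f, k⟫_ℂ = ⟪A f, h⟫_ℂ := by
  obtain ⟨h, hh⟩ := mem_DAB_iff.mp hk
  exact ⟨h, fun f => by rw [← adjoint_inner_right, ← adjoint_inner_right, hh]⟩

theorem adjoint_starProjection_closure_range (x : K) :
    adjoint C (C.range.topologicalClosure.starProjection x) = adjoint C x := by
  have hmem : x - C.range.topologicalClosure.starProjection x ∈ (adjoint C).ker := by
    rw [← orthogonal_range, ← Submodule.orthogonal_closure]
    exact Submodule.sub_starProjection_mem_orthogonal x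
  rw [LinearMap.mem_ker, ContinuousLinearMap.coe_coe, map_sub, sub_eq_zero] at hmem
  exact hmem.symm

theorem singularWith_iff : SingularWith A C ↔ ∀ k ∈ DAB A C, adjoint C k = 0 := by
  constructor
  · intro hC k hk
    obtain ⟨h, hh⟩ := exists_inner_eq_of_mem_DAB hk
    set u := adjoint C k
    let D : E →L[ℂ] E := (innerSL ℂ u).smulRight u
    have hD : ∀ f, ‖D f‖ = ‖⟪u, f⟫_ℂ‖ * ‖u‖ := fun f => norm_smul _ _
    have hDA : ∀ f, ‖D f‖ ≤ (‖h‖ * ‖u‖ + 1) * ‖A f‖ := fun f => by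
      rw [hD, adjoint_inner_left, ← inner_conj_symm, hh, RCLike.norm_conj]
      calc ‖⟪A f, h⟫_ℂ‖ * ‖u‖ ≤ ‖A f‖ * ‖h‖ * ‖u‖ := by
            gcongr; exact norm_inner_le_norm _ _
        _ ≤ _ := by nlinarith [norm_nonneg (A f), norm_nonneg u, norm_nonneg h]
    have hDC : ∀ f, ‖D f‖ ≤ (‖k‖ * ‖u‖ + 1) * ‖C f‖ := fun f => by
      rw [hD, adjoint_inner_left]
      calc ‖⟪k, C f⟫_ℂ‖ * ‖u‖ ≤ ‖k‖ * ‖C f‖ * ‖u‖ := by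
            gcongr; exact norm_inner_le_norm _ _
        _ ≤ _ := by nlinarith [norm_nonneg (C f), norm_nonneg u, norm_nonneg k]
    have hD0 := congrArg (· u) (hC D ⟨_, by positivity, hDA⟩ ⟨_, by positivity, hDC⟩)
    simpa [D] using hD0
  · rintro hC D ⟨c, -, hDA⟩ ⟨c', -, hDC⟩
    suffices adjoint D = 0 by simpa using congrArg adjoint this
    ext x
    obtain ⟨h, hh⟩ := exists_adjoint_eq_of_norm_le D A hDA x
    obtain ⟨k, hk⟩ := exists_adjoint_eq_of_norm_le D C hDC x
    have hkD : k ∈ DAB A C := mem_DAB_iff.mpr ⟨h, hh.trans hk.symm⟩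
    rw [zero_apply, ← hk]
    exact hC k hkD

end DAB

section AlmostDominated

variable {E H K : Type}
  [NormedAddCommGroup E] [InnerProductSpace ℂ E] [CompleteSpace E]
  [NormedAddCommGroup H] [InnerProductSpace ℂ H] [CompleteSpace H]
  [NormedAddCommGroup K] [InnerProductSpace ℂ K] [CompleteSpace K]
  {A : E →L[ℂ] H} {C : E →L[ℂ] K}

attribute [instance] AlmostDominatedWitness.nacg AlmostDominatedWitness.ips
  AlmostDominatedWitness.cs

namespace AlmostDominatedWitness

theorem norm_le (W : AlmostDominatedWitness A C) (n : ℕ) (f : E) : ‖W.Bn n f‖ ≤ ‖C f‖ :=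
  (monotone_nat_of_le_succ fun m => W.mono m f).ge_of_tendsto (W.tendsto f) n

theorem exists_mem_DAB_inner_eq (W : AlmostDominatedWitness A C) (n : ℕ) (g : E) :
    ∃ w ∈ DAB A C, ‖w‖ ≤ ‖C g‖ ∧
      ∀ f, ⟪w, C f⟫_ℂ = ⟪W.Bn n g, W.Bn n f⟫_ℂ := by
  have hbound : ∀ f, ‖⟪W.Bn n g, W.Bn n f⟫_ℂ‖ ≤ ‖C g‖ * ‖C f‖ := fun f =>
    (norm_inner_le_norm _ _).trans
      (mul_le_mul (W.norm_le n g) (W.norm_le n f) (norm_nonneg _) (norm_nonneg _))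
  obtain ⟨w, hw, hwC⟩ := exists_inner_eq_of_norm_le C
    ((innerSL ℂ (W.Bn n g)).comp (W.Bn n)) (norm_nonneg _) hbound
  refine ⟨w, mem_DAB_of_norm_inner_le (mul_nonneg (norm_nonneg (W.Bn n g)) (W.c_nonneg n))
    fun f => ?_, hw, hwC⟩
  rw [hwC f]
  calc ‖⟪W.Bn n g, W.Bn n f⟫_ℂ‖
      ≤ ‖W.Bn n g‖ * ‖W.Bn n f‖ := norm_inner_le_norm _ _
    _ ≤ ‖W.Bn n g‖ * (W.c n * ‖A f‖) := by gcongr; exact W.bound n f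
    _ = ‖W.Bn n g‖ * W.c n * ‖A f‖ := by ring

theorem inner_eq_zero (W : AlmostDominatedWitness A C) {k : K}
    (hkC : k ∈ C.range.topologicalClosure) (hkD : k ∈ (DAB A C)ᗮ) (g : E) :
    ⟪C g, k⟫_ℂ = 0 := by
  choose w hwD hw hwC using (W.exists_mem_DAB_inner_eq · g)
  have hlim : Tendsto (fun n => ⟪C g - w n, k⟫_ℂ) atTop (𝓝 0) := by
    rw [← SetLike.mem_coe, Submodule.topologicalClosure_coe, LinearMap.coe_range] at hkC
    refine tendsto_inner_zero_of_mem_closure (R := ‖C g‖ + ‖C g‖)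
      (fun n => (norm_sub_le _ _).trans (by linarith [hw n])) ?_ hkC
    rintro _ ⟨f, rfl⟩
    have := tendsto_inner_of_tendsto_norm (fun n => (W.Bn n : E →ₗ[ℂ] W.Kn n))
      (C : E →ₗ[ℂ] K) W.tendsto g f
    simpa [inner_sub_left, hwC] using this.const_sub ⟪C g, C f⟫_ℂ
  have hconst : ∀ n, ⟪C g - w n, k⟫_ℂ = ⟪C g, k⟫_ℂ := fun n => by
    rw [inner_sub_left, Submodule.inner_right_of_mem_orthogonal (hwD n) hkD, sub_zero]
  simp only [hconst] at hlim
  exact tendsto_nhds_unique tendsto_const_nhds hlim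

end AlmostDominatedWitness

theorem starProjection_closure_range_mem_DAB {k : K} (hk : k ∈ DAB A C) :
    C.range.topologicalClosure.starProjection k ∈ DAB A C := by
  rw [mem_DAB_iff, adjoint_starProjection_closure_range]
  exact mem_DAB_iff.mp hk

theorem AlmostDominated.mem_topologicalClosure (hC : AlmostDominated A C) (f : E) :
    C f ∈ (DAB A C).topologicalClosure := by
  obtain ⟨W⟩ := hC
  set P := C.range.topologicalClosure
  rw [← Submodule.orthogonal_orthogonal_eq_closure, Submodule.mem_orthogonal']
  intro k hk
  have hPk : P.starProjection k ∈ (DAB A C)ᗮ := fun d hd => by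
    rw [← Submodule.inner_starProjection_left_eq_right]
    exact Submodule.inner_right_of_mem_orthogonal (starProjection_closure_range_mem_DAB hd) hk
  have hCf : P.starProjection (C f) = C f := Submodule.starProjection_eq_self_iff.mpr
    (Submodule.le_topologicalClosure _ (LinearMap.mem_range_self _ f))
  rw [← hCf, Submodule.inner_starProjection_left_eq_right]
  exact W.inner_eq_zero (P.starProjection_apply_mem k) hPk f

theorem AlmostDominated.topologicalClosure_range_le (hC : AlmostDominated A C) :
    C.range.topologicalClosure ≤
      (DAB A C ⊓ C.range.topologicalClosure).topologicalClosure := by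
  set P := C.range.topologicalClosure
  intro k hk
  have hkD : k ∈ (DAB A C).topologicalClosure :=
    Submodule.topologicalClosure_minimal _
      (by rintro _ ⟨f, rfl⟩; exact hC.mem_topologicalClosure f)
      (Submodule.isClosed_topologicalClosure _) hk
  rw [← Submodule.starProjection_eq_self_iff.mpr hk]
  rw [← SetLike.mem_coe, Submodule.topologicalClosure_coe] at hkD ⊢
  exact map_mem_closure P.starProjection.continuous hkD fun d hd =>
    ⟨starProjection_closure_range_mem_DAB hd, P.starProjection_apply_mem d⟩

end AlmostDominated

section GraphApproximation

variable {E H K : Type} [NormedAddCommGroup E] [InnerProductSpace ℂ E]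
  [NormedAddCommGroup H] [InnerProductSpace ℂ H] [NormedAddCommGroup K] [InnerProductSpace ℂ K]
  (A : E →L[ℂ] H) (C : E →L[ℂ] K)

noncomputable def graphMap (t : ℂ) : E →L[ℂ] WithLp 2 (H × K) :=
  (WithLp.prodContinuousLinearEquiv 2 ℂ H K).symm.toContinuousLinearMap ∘L ((t • A).prod C)

theorem dist_graphMap_sq (n : ℕ) (f g : E) :
    dist (graphMap A C 0 f) (graphMap A C n g) ^ 2 = (n * ‖A g‖) ^ 2 + ‖C f - C g‖ ^ 2 := by
  rw [WithLp.prod_dist_eq_of_L2, Real.sq_sqrt (by positivity)]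
  simp [graphMap, dist_eq_norm, norm_smul]

variable [CompleteSpace H] [CompleteSpace K]

noncomputable def graphApprox (n : ℕ) : E →L[ℂ] WithLp 2 (H × K) :=
  (.id ℂ _ - (graphMap A C n).range.topologicalClosure.starProjection) ∘L graphMap A C 0

variable {A C}

theorem norm_graphApprox (n : ℕ) (f : E) :
    ‖graphApprox A C n f‖ = Metric.infDist (graphMap A C 0 f) (Set.range (graphMap A C n)) := by
  rw [graphApprox, comp_apply, sub_apply, id_apply, Submodule.norm_sub_starProjection_eq_infDist,
    Submodule.topologicalClosure_coe, Metric.infDist_closure, LinearMap.coe_range]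
  rfl

theorem norm_graphApprox_le_dist (n : ℕ) (f g : E) :
    ‖graphApprox A C n f‖ ≤ dist (graphMap A C 0 f) (graphMap A C n g) :=
  (norm_graphApprox n f).trans_le (Metric.infDist_le_dist_of_mem (Set.mem_range_self g))

theorem exists_dist_graphMap_lt {n : ℕ} {f : E} {r : ℝ} (h : ‖graphApprox A C n f‖ < r) :
    ∃ g, dist (graphMap A C 0 f) (graphMap A C n g) < r := by
  rw [norm_graphApprox, Metric.infDist_lt_iff (Set.range_nonempty _)] at h
  obtain ⟨_, ⟨g, rfl⟩, hg⟩ := h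
  exact ⟨g, hg⟩

theorem norm_graphApprox_le_norm_A (n : ℕ) (f : E) :
    ‖graphApprox A C n f‖ ≤ n * ‖A f‖ := by
  refine (norm_graphApprox_le_dist n f f).trans_eq ?_
  rw [← sq_eq_sq₀ dist_nonneg (by positivity), dist_graphMap_sq]
  simp

theorem norm_graphApprox_le_norm_C (n : ℕ) (f : E) : ‖graphApprox A C n f‖ ≤ ‖C f‖ := by
  refine (norm_graphApprox_le_dist n f 0).trans_eq ?_
  rw [← sq_eq_sq₀ dist_nonneg (norm_nonneg _), dist_graphMap_sq]
  simp

theorem norm_graphApprox_le_succ (n : ℕ) (f : E) :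
    ‖graphApprox A C n f‖ ≤ ‖graphApprox A C (n + 1) f‖ := by
  refine le_of_forall_gt fun r hr => ?_
  obtain ⟨g, hg⟩ := exists_dist_graphMap_lt hr
  refine (norm_graphApprox_le_dist n f g).trans_lt (lt_of_le_of_lt ?_ hg)
  rw [← sq_le_sq₀ dist_nonneg dist_nonneg, dist_graphMap_sq, dist_graphMap_sq]
  gcongr
  simp

variable [CompleteSpace E]

theorem tendsto_inner_of_mem_DAB {g : ℕ → E} {r : ℝ} (hg : ∀ n, n * ‖A (g n)‖ ≤ r)
    {k : K} (hk : k ∈ DAB A C) : Tendsto (fun n => ⟪C (g n), k⟫_ℂ) atTop (𝓝 0) := by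
  obtain ⟨h, hh⟩ := exists_inner_eq_of_mem_DAB hk
  refine squeeze_zero_norm' ?_ (tendsto_const_div_atTop_nhds_zero_nat (‖h‖ * r))
  filter_upwards [eventually_gt_atTop 0] with n hn
  have hn' : (0 : ℝ) < n := Nat.cast_pos.mpr hn
  rw [hh, le_div_iff₀ hn']
  calc ‖⟪A (g n), h⟫_ℂ‖ * n ≤ ‖A (g n)‖ * ‖h‖ * n := by
        gcongr; exact norm_inner_le_norm _ _
    _ = ‖h‖ * (n * ‖A (g n)‖) := by ring
    _ ≤ ‖h‖ * r := by gcongr; exact hg n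

theorem norm_le_of_dist_graphMap_le {f : E} (hf : C f ∈ (DAB A C).topologicalClosure)
    {g : ℕ → E} {r : ℝ}
    (hg : ∀ n : ℕ, dist (graphMap A C 0 f) (graphMap A C n (g n)) ≤ r) :
    ‖C f‖ ≤ r := by
  have hr : 0 ≤ r := dist_nonneg.trans (hg 0)
  have hsq : ∀ n, (n * ‖A (g n)‖) ^ 2 + ‖C f - C (g n)‖ ^ 2 ≤ r ^ 2 := fun n => by
    rw [← dist_graphMap_sq]
    exact pow_le_pow_left₀ dist_nonneg (hg n) 2
  have hA : ∀ n, n * ‖A (g n)‖ ≤ r := fun n =>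
    abs_le_of_sq_le_sq' (by nlinarith [hsq n, sq_nonneg ‖C f - C (g n)‖]) hr |>.2
  have hC : ∀ n, ‖C f - C (g n)‖ ≤ r := fun n =>
    abs_le_of_sq_le_sq' (by nlinarith [hsq n, sq_nonneg ((n : ℝ) * ‖A (g n)‖)]) hr |>.2
  refine norm_le_of_tendsto_inner (𝕜 := ℂ) hC ?_
  rw [← SetLike.mem_coe, Submodule.topologicalClosure_coe] at hf
  refine tendsto_inner_zero_of_mem_closure (R := ‖C f‖ + r) (fun n => ?_)
    (fun k hk => tendsto_inner_of_mem_DAB hA hk) hf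
  linarith [norm_le_norm_add_norm_sub' (C (g n)) (C f), norm_sub_rev (C f) (C (g n)), hC n]

theorem tendsto_norm_graphApprox {f : E} (hf : C f ∈ (DAB A C).topologicalClosure) :
    Tendsto (fun n => ‖graphApprox A C n f‖) atTop (𝓝 ‖C f‖) := by
  have hmono : Monotone fun n => ‖graphApprox A C n f‖ :=
    monotone_nat_of_le_succ (norm_graphApprox_le_succ · f)
  have hbdd : BddAbove (Set.range fun n => ‖graphApprox A C n f‖) :=
    ⟨‖C f‖, Set.forall_mem_range.mpr (norm_graphApprox_le_norm_C · f)⟩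
  convert tendsto_atTop_ciSup hmono hbdd
  refine le_antisymm (le_of_forall_gt_imp_ge_of_dense fun r hr => ?_)
    (ciSup_le (norm_graphApprox_le_norm_C · f))
  choose g hg using fun n => exists_dist_graphMap_lt ((le_ciSup hbdd n).trans_lt hr)
  exact norm_le_of_dist_graphMap_le hf fun n => (hg n).le

theorem almostDominated_of_forall_mem_topologicalClosure
    (h : ∀ f, C f ∈ (DAB A C).topologicalClosure) : AlmostDominated A C :=
  ⟨{ Kn := fun _ => WithLp 2 (H × K)
     Bn := graphApprox A C
     c := fun n => n
     c_nonneg := fun n => n.cast_nonneg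
     bound := norm_graphApprox_le_norm_A
     mono := norm_graphApprox_le_succ
     tendsto := fun f => tendsto_norm_graphApprox (h f) }⟩

theorem almostDominated_iff : AlmostDominated A C ↔ ∀ f, C f ∈ (DAB A C).topologicalClosure :=
  ⟨AlmostDominated.mem_topologicalClosure, almostDominated_of_forall_mem_topologicalClosure⟩

end GraphApproximation

section Lebesgue

variable {E H K : Type}
  [NormedAddCommGroup E] [InnerProductSpace ℂ E] [CompleteSpace E]
  [NormedAddCommGroup H] [InnerProductSpace ℂ H] [CompleteSpace H]
  [NormedAddCommGroup K] [InnerProductSpace ℂ K] [CompleteSpace K]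
  {A : E →L[ℂ] H} {B B₁ B₂ : E →L[ℂ] K} {L : Submodule ℂ K} {PM : K →L[ℂ] K}
  {k : K}

variable (A B) in
noncomputable def lebesgueSubspace (B₂ : E →L[ℂ] K) : Submodule ℂ K :=
  ((DAB A B).topologicalClosure.starProjection ∘L B₂).range.topologicalClosure

instance : CompleteSpace (lebesgueSubspace A B B₂) := by
  unfold lebesgueSubspace
  infer_instance

theorem lebesgueSubspace_le : lebesgueSubspace A B B₂ ≤ (DAB A B).topologicalClosure :=
  Submodule.topologicalClosure_minimal _
    (by rintro _ ⟨f, rfl⟩; exact Submodule.starProjection_apply_mem _ _)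
    (Submodule.isClosed_topologicalClosure _)

theorem mem_orthogonal_lebesgueSubspace_iff (hk : k ∈ (DAB A B).topologicalClosure) :
    k ∈ (lebesgueSubspace A B B₂)ᗮ ↔ adjoint B₂ k = 0 := by
  rw [lebesgueSubspace, Submodule.orthogonal_closure, orthogonal_range, LinearMap.mem_ker,
    ContinuousLinearMap.coe_coe, adjoint_comp, (isSelfAdjoint_starProjection _).adjoint_eq,
    comp_apply, Submodule.starProjection_eq_self_iff.mpr hk]

namespace LebSubspaceData

theorem le_topologicalClosure (hd : LebSubspaceData A B L PM) :
    L ≤ (DAB A B).topologicalClosure := by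
  intro l hl
  rw [← SetLike.mem_coe, Submodule.topologicalClosure_coe]
  exact hd.2.1 hl

theorem isOrthogonalProjection (hd : LebSubspaceData A B L PM) :
    IsOrthogonalProjection ((DAB A B)ᗮ ⊔ L) PM :=
  hd.2.2.2.2

theorem orthogonal_sup_eq (hd : LebSubspaceData A B L PM) :
    ((DAB A B)ᗮ ⊔ L)ᗮ = (Lᗮ ⊓ DAB A B).topologicalClosure := by
  refine SetLike.coe_injective ?_
  rw [← Submodule.inf_orthogonal, Submodule.orthogonal_orthogonal_eq_closure, Submodule.coe_inf,
    Submodule.topologicalClosure_coe, Submodule.topologicalClosure_coe, Submodule.coe_inf,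
    hd.2.2.2.1, Set.inter_comm]

theorem DAB_inf_sup_eq_bot (hd : LebSubspaceData A B L PM) :
    DAB A B ⊓ ((DAB A B)ᗮ ⊔ L) = ⊥ :=
  Submodule.inf_orthogonal_sup_eq_bot hd.le_topologicalClosure hd.2.2.1

theorem isLebesgueTypeDecomp (hd : LebSubspaceData A B L PM) :
    IsLebesgueTypeDecomp A B (B - PM ∘L B) (PM ∘L B) := by
  have hP := hd.isOrthogonalProjection
  refine ⟨(sub_add_cancel _ _).symm,
    fun f g => Submodule.inner_left_of_mem_orthogonal (hP (B g)).1 (hP (B f)).2, ?_, ?_⟩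
  · refine almostDominated_iff.mpr fun f => ?_
    have hmem : (B - PM ∘L B) f ∈ (Lᗮ ⊓ DAB A B).topologicalClosure :=
      hd.orthogonal_sup_eq ▸ (hP (B f)).2
    refine Submodule.topologicalClosure_mono (fun k hk => ?_) hmem
    have hkM : k ∈ ((DAB A B)ᗮ ⊔ L)ᗮ :=
      hd.orthogonal_sup_eq ▸ Submodule.le_topologicalClosure _ hk
    refine (mem_DAB_iff_of_adjoint_eq ?_).mp hk.2
    rw [map_sub, adjoint_comp, sub_apply, comp_apply, hP.adjoint_eq, hP.apply_eq_zero hkM,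
      map_zero, sub_zero]
  · refine singularWith_iff.mpr fun k hk => ?_
    obtain ⟨h, hh⟩ := mem_DAB_iff.mp hk
    rw [adjoint_comp, hP.adjoint_eq, comp_apply] at hh ⊢
    have hPk : PM k ∈ DAB A B ⊓ ((DAB A B)ᗮ ⊔ L) :=
      ⟨mem_DAB_iff.mpr ⟨h, hh⟩, (hP k).1⟩
    rw [hd.DAB_inf_sup_eq_bot, Submodule.mem_bot] at hPk
    rw [hPk, map_zero]

theorem eq_lebesgueSubspace (hd : LebSubspaceData A B L PM) :
    L = lebesgueSubspace A B (PM ∘L B) := by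
  have hP := hd.isOrthogonalProjection
  set L' := lebesgueSubspace A B (PM ∘L B)
  have hL'L : L' ≤ L := by
    refine Submodule.topologicalClosure_minimal _ ?_ hd.1
    rintro _ ⟨f, rfl⟩
    obtain ⟨d, hdD, l, hl, hdl⟩ := Submodule.mem_sup.mp (hP (B f)).1
    have hd0 : (DAB A B).topologicalClosure.starProjection d = 0 := by
      rwa [Submodule.starProjection_apply_eq_zero_iff, Submodule.orthogonal_closure]
    change (DAB A B).topologicalClosure.starProjection (PM (B f)) ∈ L
    rwa [← hdl, map_add, hd0, zero_add,
      Submodule.starProjection_eq_self_iff.mpr (hd.le_topologicalClosure hl)]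
  have hinf : L'ᗮ ⊓ L = ⊥ := by
    refine eq_bot_iff.mpr fun k hk => ?_
    obtain ⟨hkL', hkL⟩ := Submodule.mem_inf.mp hk
    rw [mem_orthogonal_lebesgueSubspace_iff (hd.le_topologicalClosure hkL), adjoint_comp,
      hP.adjoint_eq, comp_apply, hP.apply_eq_self (Submodule.mem_sup_right hkL)] at hkL'
    have hkD := Submodule.mem_inf.mpr ⟨hkL, mem_DAB_of_adjoint_eq_zero (A := A) hkL'⟩
    rwa [hd.2.2.1] at hkD
  rw [← Submodule.sup_orthogonal_inf_of_hasOrthogonalProjection hL'L, hinf, sup_bot_eq]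

end LebSubspaceData

namespace IsLebesgueTypeDecomp

theorem adjoint_apply_eq (hdec : IsLebesgueTypeDecomp A B B₁ B₂) (k : K) :
    adjoint B k = adjoint B₁ k + adjoint B₂ k := by
  rw [hdec.1, map_add, add_apply]

theorem range_right_le_orthogonal (hdec : IsLebesgueTypeDecomp A B B₁ B₂) :
    B₂.range ≤ B₁.rangeᗮ := by
  rintro _ ⟨g, rfl⟩
  rw [Submodule.mem_orthogonal]
  rintro _ ⟨f, rfl⟩
  exact hdec.2.1 f g

theorem adjoint_left_eq_zero {k : K}
    (hk : k ∈ B₁.range.topologicalClosureᗮ) : adjoint B₁ k = 0 := by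
  rwa [Submodule.orthogonal_closure, orthogonal_range] at hk

theorem adjoint_right_eq_zero (hdec : IsLebesgueTypeDecomp A B B₁ B₂) {k : K}
    (hk : k ∈ B₁.range.topologicalClosure) : adjoint B₂ k = 0 := by
  rw [← Submodule.orthogonal_orthogonal_eq_closure] at hk
  have hk' := Submodule.orthogonal_le hdec.range_right_le_orthogonal hk
  rwa [orthogonal_range] at hk'

theorem DAB_inf_closure_range (hdec : IsLebesgueTypeDecomp A B B₁ B₂) :
    DAB A B₁ ⊓ B₁.range.topologicalClosure =
      DAB A B ⊓ B₁.range.topologicalClosure := by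
  ext k
  simp only [Submodule.mem_inf]
  refine and_congr_left fun hk => mem_DAB_iff_of_adjoint_eq ?_
  rw [hdec.adjoint_apply_eq, hdec.adjoint_right_eq_zero hk, add_zero]

theorem closure_range_le (hdec : IsLebesgueTypeDecomp A B B₁ B₂) :
    B₁.range.topologicalClosure ≤
      (DAB A B ⊓ B₁.range.topologicalClosure).topologicalClosure :=
  hdec.DAB_inf_closure_range ▸ AlmostDominated.topologicalClosure_range_le hdec.2.2.1

theorem closure_range_le_topologicalClosure (hdec : IsLebesgueTypeDecomp A B B₁ B₂) :
    B₁.range.topologicalClosure ≤ (DAB A B).topologicalClosure :=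
  hdec.closure_range_le.trans (Submodule.topologicalClosure_mono inf_le_left)

theorem closure_range_le_orthogonal (hdec : IsLebesgueTypeDecomp A B B₁ B₂) :
    B₁.range.topologicalClosure ≤ (lebesgueSubspace A B B₂)ᗮ := by
  rw [lebesgueSubspace, Submodule.orthogonal_closure]
  refine Submodule.topologicalClosure_minimal _ ?_ (Submodule.isClosed_orthogonal _)
  rintro _ ⟨f, rfl⟩
  rw [Submodule.mem_orthogonal]
  rintro _ ⟨g, rfl⟩
  have hf : B₁ f ∈ (DAB A B).topologicalClosure := hdec.closure_range_le_topologicalClosure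
    (Submodule.le_topologicalClosure _ (LinearMap.mem_range_self _ f))
  change ⟪(DAB A B).topologicalClosure.starProjection (B₂ g), B₁ f⟫_ℂ = 0
  rw [Submodule.inner_starProjection_left_eq_right, Submodule.starProjection_eq_self_iff.mpr hf,
    inner_eq_zero_symm]
  exact hdec.2.1 f g

theorem lebesgueSubspace_inf_DAB (hdec : IsLebesgueTypeDecomp A B B₁ B₂) :
    lebesgueSubspace A B B₂ ⊓ DAB A B = ⊥ := by
  refine eq_bot_iff.mpr fun k hk => ?_
  obtain ⟨hkL, hkD⟩ := Submodule.mem_inf.mp hk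
  have hkP : k ∈ B₁.range.topologicalClosureᗮ :=
    Submodule.orthogonal_le hdec.closure_range_le_orthogonal
      (Submodule.le_orthogonal_orthogonal _ hkL)
  have hkD₂ : k ∈ DAB A B₂ := (mem_DAB_iff_of_adjoint_eq (by
    rw [hdec.adjoint_apply_eq, adjoint_left_eq_zero hkP, zero_add])).mp hkD
  have hkL' : k ∈ (lebesgueSubspace A B B₂)ᗮ :=
    (mem_orthogonal_lebesgueSubspace_iff (lebesgueSubspace_le hkL)).mpr
      (singularWith_iff.mp hdec.2.2.2 k hkD₂)
  have hk0 := Submodule.mem_inf.mpr ⟨hkL, hkL'⟩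
  rwa [Submodule.inf_orthogonal_eq_bot] at hk0

theorem orthogonal_inf_le (hdec : IsLebesgueTypeDecomp A B B₁ B₂) :
    (lebesgueSubspace A B B₂)ᗮ ⊓ (DAB A B).topologicalClosure ≤
      ((lebesgueSubspace A B B₂)ᗮ ⊓ DAB A B).topologicalClosure := by
  set P := B₁.range.topologicalClosure
  intro k hk
  obtain ⟨hkL, hkD⟩ := Submodule.mem_inf.mp hk
  have hPk : P.starProjection k ∈ P := P.starProjection_apply_mem k
  have hk₁ :
      P.starProjection k ∈ ((lebesgueSubspace A B B₂)ᗮ ⊓ DAB A B).topologicalClosure :=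
    Submodule.topologicalClosure_mono (show DAB A B ⊓ P ≤ _ ⊓ DAB A B from
      fun x hx => ⟨hdec.closure_range_le_orthogonal hx.2, hx.1⟩)
      (hdec.closure_range_le hPk)
  have hk₂L : k - P.starProjection k ∈ (lebesgueSubspace A B B₂)ᗮ :=
    Submodule.sub_mem _ hkL (hdec.closure_range_le_orthogonal hPk)
  have hk₂D : k - P.starProjection k ∈ (DAB A B).topologicalClosure :=
    Submodule.sub_mem _ hkD (hdec.closure_range_le_topologicalClosure hPk)
  have hk₂ : adjoint B (k - P.starProjection k) = 0 := by
    rw [hdec.adjoint_apply_eq, adjoint_left_eq_zero (P.sub_starProjection_mem_orthogonal k),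
      (mem_orthogonal_lebesgueSubspace_iff hk₂D).mp hk₂L, add_zero]
  rw [← sub_add_cancel k (P.starProjection k), add_comm]
  exact Submodule.add_mem _ hk₁
    (Submodule.le_topologicalClosure _ ⟨hk₂L, mem_DAB_of_adjoint_eq_zero hk₂⟩)

theorem exists_lebSubspaceData (hdec : IsLebesgueTypeDecomp A B B₁ B₂) :
    ∃ (L : Submodule ℂ K) (PM : K →L[ℂ] K),
      LebSubspaceData A B L PM ∧ B₁ = B - PM ∘L B ∧ B₂ = PM ∘L B := by
  set L := lebesgueSubspace A B B₂
  set M := (DAB A B)ᗮ ⊔ L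
  set PM := (DAB A B)ᗮ.starProjection + L.starProjection
  have hPM : IsOrthogonalProjection M PM :=
    (Submodule.isOrthogonalProjection_starProjection _).add
      (Submodule.isOrthogonalProjection_starProjection _)
      (Submodule.isOrtho_iff_le.mpr (by
        rw [Submodule.orthogonal_orthogonal_eq_closure]; exact lebesgueSubspace_le)).symm
  have hB₂M : ∀ g, B₂ g ∈ M := fun g => by
    rw [← sub_add_cancel (B₂ g) ((DAB A B).topologicalClosure.starProjection (B₂ g))]
    refine Submodule.add_mem_sup ?_
      (Submodule.le_topologicalClosure _ (LinearMap.mem_range_self _ g))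
    rw [← Submodule.orthogonal_closure]
    exact Submodule.sub_starProjection_mem_orthogonal _
  have hB₁M : ∀ f, B₁ f ∈ Mᗮ := fun f => by
    have hf := B₁.range.le_topologicalClosure
      (LinearMap.mem_range_self (B₁ : E →ₗ[ℂ] K) f)
    rw [← Submodule.inf_orthogonal, Submodule.orthogonal_orthogonal_eq_closure]
    exact ⟨hdec.closure_range_le_topologicalClosure hf, hdec.closure_range_le_orthogonal hf⟩
  have hB₂ : B₂ = PM ∘L B := ContinuousLinearMap.ext fun f => by
    rw [comp_apply, hdec.1, add_apply B₁, map_add, hPM.apply_eq_zero (hB₁M f),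
      hPM.apply_eq_self (hB₂M f), zero_add]
  have hclosure : (Lᗮ ⊓ DAB A B).topologicalClosure = Lᗮ ⊓ (DAB A B).topologicalClosure :=
    le_antisymm (Submodule.topologicalClosure_minimal _
      (inf_le_inf_left _ (Submodule.le_topologicalClosure _))
      (L.isClosed_orthogonal.inter (Submodule.isClosed_topologicalClosure _)))
      hdec.orthogonal_inf_le
  refine ⟨L, PM, ⟨Submodule.isClosed_topologicalClosure _, ?_, hdec.lebesgueSubspace_inf_DAB,
    ?_, hPM⟩, ?_, hB₂⟩
  · rw [← Submodule.topologicalClosure_coe]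
    exact lebesgueSubspace_le
  · simpa only [Submodule.topologicalClosure_coe, Submodule.coe_inf] using
      congrArg (fun S : Submodule ℂ K => (S : Set K)) hclosure
  · rw [← hB₂, hdec.1, add_sub_cancel_right]

end IsLebesgueTypeDecomp

end Lebesgue

/-- A pair `(B₁, B₂)` is a Lebesgue type decomposition of `B` with respect
to `A` if and only if there are a closed subspace `L` of `K` with `L ⊆ closure D(A,B)`,
`L ∩ D(A,B) = {0}` and `closure (Lᗮ ∩ D(A,B)) = Lᗮ ∩ closure D(A,B)`, and the orthogonal
projection `PM` of `K` onto `M = D(A,B)ᗮ ⊕ L`, such that `B₁ = (I − PM) ∘ B` and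
`B₂ = PM ∘ B`; moreover distinct such subspaces `L` give distinct decompositions, so the
correspondence is one-to-one. -/
theorem lebesgue_type_decompositions_parametrization
    {E H K : Type}
    [NormedAddCommGroup E] [InnerProductSpace ℂ E] [CompleteSpace E]
    [NormedAddCommGroup H] [InnerProductSpace ℂ H] [CompleteSpace H]
    [NormedAddCommGroup K] [InnerProductSpace ℂ K] [CompleteSpace K]
    (A : E →L[ℂ] H) (B B₁ B₂ : E →L[ℂ] K) :
    (IsLebesgueTypeDecomp A B B₁ B₂ ↔
      ∃ (L : Submodule ℂ K) (PM : K →L[ℂ] K),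
        LebSubspaceData A B L PM ∧ B₁ = B - PM ∘L B ∧ B₂ = PM ∘L B) ∧
    (∀ (L L' : Submodule ℂ K) (PM PM' : K →L[ℂ] K),
      LebSubspaceData A B L PM → LebSubspaceData A B L' PM' →
        PM ∘L B = PM' ∘L B → L = L') := by
  refine ⟨⟨IsLebesgueTypeDecomp.exists_lebSubspaceData, ?_⟩, ?_⟩
  · rintro ⟨L, PM, hd, rfl, rfl⟩
    exact hd.isLebesgueTypeDecomp
  · intro L L' PM PM' hd hd' h
    rw [hd.eq_lebesgueSubspace, hd'.eq_lebesgueSubspace, h]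
end
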